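/- arXiv:2105.10679 — 2 statements merged into one kernel-verified Lean document; each statement's English description precedes it below -/
import Mathlib

section
/- Let 𝒳 be a thick coherent configuration on a finite set Ω, and let e, f be parabolics of 𝒳 with e ⊥ f (meaning that for all basis relations x ⊆ e and y ⊆ f, if x·y ≠ ∅ then x·y is a basis relation). Then e ∧ f = 1_Ω. -/
open Set

def rcomp {Ω : Type*} (r s : Set (Ω × Ω)) : Set (Ω × Ω) :=
  {p | ∃ γ, (p.1, γ) ∈ r ∧ (γ, p.2) ∈ s}

def rconv {Ω : Type*} (r : Set (Ω × Ω)) : Set (Ω × Ω) := {p | (p.2, p.1) ∈ r}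

def rdiag (Ω : Type*) : Set (Ω × Ω) := {p | p.1 = p.2}

def IsEquivRel {Ω : Type*} (e : Set (Ω × Ω)) : Prop :=
  Equivalence (fun a b => (a, b) ∈ e)

/-- The smallest equivalence relation containing `r`. -/
def eqvClosure {Ω : Type*} (r : Set (Ω × Ω)) : Set (Ω × Ω) :=
  ⋂₀ {e | IsEquivRel e ∧ r ⊆ e}

/-- Join of two equivalence relations. -/
def rjoin {Ω : Type*} (e f : Set (Ω × Ω)) : Set (Ω × Ω) := eqvClosure (e ∪ f)

def IsClass {Ω : Type*} (e : Set (Ω × Ω)) (Δ : Set Ω) : Prop :=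
  ∃ α, Δ = {β | (α, β) ∈ e}

def setoidRel {Ω : Type*} (e : Setoid Ω) : Set (Ω × Ω) := {p | e.r p.1 p.2}

/-- The relation induced on the quotient `Ω/e` by a relation `r` on `Ω`. -/
def qmap {Ω : Type*} (e : Setoid Ω) (r : Set (Ω × Ω)) :
    Set (Quotient e × Quotient e) :=
  {p | ∃ a b : Ω, Quotient.mk e a = p.1 ∧ Quotient.mk e b = p.2 ∧ (a, b) ∈ r}

/-- Tensor product of relations. -/
def tensorRel {m : ℕ} {Ω : Fin m → Type*} (s : ∀ i, Set (Ω i × Ω i)) :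
    Set ((∀ i, Ω i) × (∀ i, Ω i)) :=
  {p | ∀ i, (p.1 i, p.2 i) ∈ s i}

def tensor2 {Ω₁ Ω₂ : Type*} (s₁ : Set (Ω₁ × Ω₁)) (s₂ : Set (Ω₂ × Ω₂)) :
    Set ((Ω₁ × Ω₂) × (Ω₁ × Ω₂)) :=
  {p | (p.1.1, p.2.1) ∈ s₁ ∧ (p.1.2, p.2.2) ∈ s₂}

/-- `PP e I` is the join of the equivalence relations `e i`, `i ∈ I`. -/
def PP {Ω : Type*} {m : ℕ} (e : Fin m → Set (Ω × Ω)) (I : Set (Fin m)) :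
    Set (Ω × Ω) :=
  eqvClosure (⋃ i ∈ I, e i)

/-- An atomic Cartesian decomposition, given as a family of equivalence relations. -/
def IsACDfam {Ω : Type*} {m : ℕ} (e : Fin m → Set (Ω × Ω)) : Prop :=
  0 < m ∧ (∀ i, IsEquivRel (e i)) ∧ (∀ i, e i ≠ rdiag Ω) ∧
  (∀ i j, rcomp (e i) (e j) = rcomp (e j) (e i)) ∧
  (∀ i, e i ∩ PP e ({i}ᶜ) = rdiag Ω) ∧
  (∀ i, rjoin (e i) (PP e ({i}ᶜ)) = Set.univ)

/-- Join of a set of relations. -/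
def joinAll {Ω : Type*} (B : Set (Set (Ω × Ω))) : Set (Ω × Ω) := eqvClosure (⋃₀ B)

/-- The `P`-complement of `e`: the join of the members of `P` other than `e`. -/
def pcompl {Ω : Type*} (P : Set (Set (Ω × Ω))) (e : Set (Ω × Ω)) : Set (Ω × Ω) :=
  joinAll (P \ {e})

/-- An atomic Cartesian decomposition, given as a set of equivalence relations. -/
def IsACD {Ω : Type*} (P : Set (Set (Ω × Ω))) : Prop :=
  P.Nonempty ∧ (∀ e ∈ P, IsEquivRel e ∧ e ≠ rdiag Ω) ∧
  (∀ e ∈ P, ∀ f ∈ P, rcomp e f = rcomp f e) ∧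
  (∀ e ∈ P, e ∩ pcompl P e = rdiag Ω ∧ rjoin e (pcompl P e) = Set.univ)

def IsPartitionOf {α : Type*} (P : Set α) (C : Set (Set α)) : Prop :=
  (∀ B ∈ C, B.Nonempty) ∧ (∀ B ∈ C, ∀ B' ∈ C, B ≠ B' → Disjoint B B') ∧ ⋃₀ C = P

/-- A coherent configuration on `Ω`. -/
structure CohCfg (Ω : Type*) where
  S : Set (Set (Ω × Ω))
  empty_not_mem : ∅ ∉ S
  cover : ∀ p : Ω × Ω, ∃ s ∈ S, p ∈ s
  pairwise_disjoint : ∀ s ∈ S, ∀ t ∈ S, s ≠ t → Disjoint s t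
  diag_union : ∀ s ∈ S, (s ∩ rdiag Ω).Nonempty → s ⊆ rdiag Ω
  conv_mem : ∀ s ∈ S, rconv s ∈ S
  inter_const : ∀ r ∈ S, ∀ s ∈ S, ∀ t ∈ S, ∀ p ∈ t, ∀ q ∈ t,
    ({γ : Ω | (p.1, γ) ∈ r ∧ (γ, p.2) ∈ s}).ncard
      = ({γ : Ω | (q.1, γ) ∈ r ∧ (γ, q.2) ∈ s}).ncard

/-- The valency of a basis relation (the common size of the rows over the left support). -/
noncomputable def valency {Ω : Type*} (s : Set (Ω × Ω)) : ℕ :=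
  sSup ((fun α => ({β | (α, β) ∈ s} : Set Ω).ncard) '' {α | ∃ β, (α, β) ∈ s})

def IsThick {Ω : Type*} (X : CohCfg Ω) : Prop :=
  ∀ s ∈ X.S, Disjoint s (rdiag Ω) → ¬(valency s = 1 ∧ valency (rconv s) = 1)

def IsParabolic {Ω : Type*} (X : CohCfg Ω) (e : Set (Ω × Ω)) : Prop :=
  IsEquivRel e ∧ ∀ s ∈ X.S, (s ∩ e).Nonempty → s ⊆ e

def Perp {Ω : Type*} (X : CohCfg Ω) (e f : Set (Ω × Ω)) : Prop :=
  ∀ x ∈ X.S, x ⊆ e → ∀ y ∈ X.S, y ⊆ f → (rcomp x y).Nonempty → rcomp x y ∈ X.S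

def Redundant {Ω : Type*} (X : CohCfg Ω) (s : Set (Ω × Ω)) : Prop :=
  ∃ x ∈ X.S, ∃ y ∈ X.S, Disjoint x (rdiag Ω) ∧ Disjoint y (rdiag Ω) ∧
    s = rcomp x y ∧ eqvClosure x ∩ eqvClosure y = rdiag Ω

/-
If `x` is an irreflexive basis relation inside `e ∩ f`, then so is `x*`, and `e ⊥ f` makes both
`x x*` and `x* x` basis relations. Each of them meets the diagonal, so lies in it; that is, `x`
and `x*` are partial functions, hence thin, contradicting thickness.
-/

section Relations

variable {Ω : Type*}

theorem IsEquivRel.rdiag_subset {e : Set (Ω × Ω)} (he : IsEquivRel e) : rdiag Ω ⊆ e := by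
  rintro ⟨α, β⟩ (rfl : α = β)
  exact he.refl α

theorem IsEquivRel.rconv_subset {e s : Set (Ω × Ω)} (he : IsEquivRel e) (hs : s ⊆ e) :
    rconv s ⊆ e :=
  fun _ hp => he.symm (hs hp)

theorem valency_eq_one_of_rcomp_rconv_subset_rdiag {s : Set (Ω × Ω)} (hne : s.Nonempty)
    (h : rcomp (rconv s) s ⊆ rdiag Ω) : valency s = 1 := by
  have row_eq {α β : Ω} (hαβ : (α, β) ∈ s) : {γ | (α, γ) ∈ s} = {β} :=
    eq_singleton_iff_unique_mem.2
      ⟨hαβ, fun γ hαγ => h (⟨α, hαγ, hαβ⟩ : (γ, β) ∈ rcomp (rconv s) s)⟩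
  have himg :
      (fun α => ({β | (α, β) ∈ s} : Set Ω).ncard) '' {α | ∃ β, (α, β) ∈ s} = {1} := by
    refine eq_singleton_iff_unique_mem.2 ⟨?_, ?_⟩
    · obtain ⟨⟨α, β⟩, hαβ⟩ := hne
      exact ⟨α, ⟨β, hαβ⟩, by simp only [row_eq hαβ, ncard_singleton]⟩
    · rintro _ ⟨α, ⟨β, hαβ⟩, rfl⟩
      simp only [row_eq hαβ, ncard_singleton]
  rw [valency, himg, csSup_singleton]

end Relations

namespace CohCfg

variable {Ω : Type*} (X : CohCfg Ω)

theorem disjoint_rdiag_of_mem {s : Set (Ω × Ω)} (hs : s ∈ X.S) {p : Ω × Ω} (hp : p ∈ s)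
    (hpd : p ∉ rdiag Ω) : Disjoint s (rdiag Ω) :=
  disjoint_left.2 fun _ hq hqd => hpd (X.diag_union s hs ⟨_, hq, hqd⟩ hp)

end CohCfg

theorem Perp.rcomp_rconv_subset_rdiag {Ω : Type*} {X : CohCfg Ω} {e f : Set (Ω × Ω)}
    (hperp : Perp X e f) {x : Set (Ω × Ω)} (hxS : x ∈ X.S) (hxe : x ⊆ e)
    (hxf : rconv x ⊆ f) (hne : x.Nonempty) : rcomp x (rconv x) ⊆ rdiag Ω := by
  obtain ⟨⟨α, β⟩, hαβ⟩ := hne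
  have hα : (α, α) ∈ rcomp x (rconv x) := ⟨β, hαβ, hαβ⟩
  have hS : rcomp x (rconv x) ∈ X.S := hperp x hxS hxe _ (X.conv_mem x hxS) hxf ⟨_, hα⟩
  exact X.diag_union _ hS ⟨_, hα, rfl⟩

theorem stmt12_general {Ω : Type*} (X : CohCfg Ω) (hX : IsThick X)
    (e f : Set (Ω × Ω)) (he : IsParabolic X e) (hf : IsParabolic X f)
    (hperp : Perp X e f) :
    e ∩ f = rdiag Ω := by
  refine Subset.antisymm (fun p ⟨hpe, hpf⟩ => ?_)
    (subset_inter he.1.rdiag_subset hf.1.rdiag_subset)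
  by_contra hpd
  obtain ⟨x, hxS, hpx⟩ := X.cover p
  have hxe : x ⊆ e := he.2 x hxS ⟨p, hpx, hpe⟩
  have hxf : x ⊆ f := hf.2 x hxS ⟨p, hpx, hpf⟩
  refine hX x hxS (X.disjoint_rdiag_of_mem hxS hpx hpd) ⟨?_, ?_⟩
  · -- `rconv (rconv x)` is `x` definitionally
    refine valency_eq_one_of_rcomp_rconv_subset_rdiag ⟨p, hpx⟩ ?_
    exact hperp.rcomp_rconv_subset_rdiag (X.conv_mem x hxS) (he.1.rconv_subset hxe) hxf
      ⟨(p.2, p.1), hpx⟩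
  · refine valency_eq_one_of_rcomp_rconv_subset_rdiag ⟨(p.2, p.1), hpx⟩ ?_
    exact hperp.rcomp_rconv_subset_rdiag hxS hxe (hf.1.rconv_subset hxf) ⟨p, hpx⟩

/-- in a thick coherent configuration, `e ⊥ f` implies `e ∧ f = 1_Ω`. -/
theorem stmt12 {Ω : Type*} [Fintype Ω] (X : CohCfg Ω) (hX : IsThick X)
    (e f : Set (Ω × Ω)) (he : IsParabolic X e) (hf : IsParabolic X f)
    (hperp : Perp X e f) :
    e ∩ f = rdiag Ω :=
  stmt12_general X hX e f he hf hperp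
end

section
/- Let 𝒳 = (Ω,S) be a coherent configuration and s, x, y ∈ S with x, y irreflexive, s = x·y and ⟨x⟩ ∧ ⟨y⟩ = 1_Ω. Then d(s) = d(x)·d(y), where d(r) = n_r · n_{r*} is the product of the valencies of r and its converse. -/
open Set

/-!
The row of `x·y` at `α` is the union of the rows of `y` at the `x`-neighbours `β` of `α`.
Two of these rows meeting in a point would give `β ≠ β'` related in both `⟨x⟩` and `⟨y⟩`,
so the union is disjoint. Row sizes of a basis relation are constant on a fibre (they are the
intersection numbers `c_{r r*}^t` at the diagonal relations `t`), so each of the `n_x` rows of `y`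
has `n_y` points and `n_{xy} = n_x n_y`. Applied to `s* = y*·x*` this gives
`n_{s*} = n_{y*} n_{x*}`.
-/

lemma ncard_biUnion_of_ncard_eq {ι α : Type*} [Finite ι] [Finite α] {t : Set ι}
    {f : ι → Set α} (hf : t.PairwiseDisjoint f) {n : ℕ} (hn : ∀ i ∈ t, (f i).ncard = n) :
    (⋃ i ∈ t, f i).ncard = t.ncard * n := by
  rw [t.toFinite.ncard_biUnion (fun i _ => (f i).toFinite) hf, finsum_mem_congr rfl hn,
    ← finsum_one, finsum_mem_mul, one_mul]

section Relations

variable {Ω : Type*}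

/-- `row r α` is the set written `αr` in the paper. -/
def row (r : Set (Ω × Ω)) (α : Ω) : Set Ω := {β | (α, β) ∈ r}

lemma isEquivRel_eqvClosure (r : Set (Ω × Ω)) : IsEquivRel (eqvClosure r) :=
  ⟨fun a _ he => he.1.refl a, fun h e he => he.1.symm (h e he),
    fun h₁ h₂ e he => he.1.trans (h₁ e he) (h₂ e he)⟩

lemma subset_eqvClosure (r : Set (Ω × Ω)) : r ⊆ eqvClosure r :=
  subset_sInter fun _ he => he.2

lemma eqvClosure_subset {r e : Set (Ω × Ω)} (he : IsEquivRel e) (hr : r ⊆ e) :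
    eqvClosure r ⊆ e :=
  sInter_subset_of_mem ⟨he, hr⟩

lemma rconv_subset_of_isEquivRel {r e : Set (Ω × Ω)} (he : IsEquivRel e) (hr : r ⊆ e) :
    rconv r ⊆ e :=
  fun ⟨_, _⟩ h => he.symm (hr h)

lemma eqvClosure_rconv (r : Set (Ω × Ω)) : eqvClosure (rconv r) = eqvClosure r := by
  have h : ∀ r : Set (Ω × Ω), eqvClosure (rconv r) ⊆ eqvClosure r := fun r =>
    eqvClosure_subset (isEquivRel_eqvClosure r)
      (rconv_subset_of_isEquivRel (isEquivRel_eqvClosure r) (subset_eqvClosure r))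
  exact (h r).antisymm (h (rconv r))

lemma rconv_rcomp (r s : Set (Ω × Ω)) : rconv (rcomp r s) = rcomp (rconv s) (rconv r) := by
  ext ⟨α, β⟩
  exact exists_congr fun _ => and_comm

lemma row_rcomp (r s : Set (Ω × Ω)) (α : Ω) : row (rcomp r s) α = ⋃ β ∈ row r α, row s β := by
  ext γ
  simp [row, rcomp]

lemma pairwiseDisjoint_row_of_inter_subset_rdiag {x y : Set (Ω × Ω)}
    (hmeet : eqvClosure x ∩ eqvClosure y ⊆ rdiag Ω) (α : Ω) :
    (row x α).PairwiseDisjoint (row y) := by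
  intro β hβ β' hβ' hne
  have hx := isEquivRel_eqvClosure x
  have hy := isEquivRel_eqvClosure y
  refine Set.disjoint_left.2 fun γ hγ hγ' => hne (show (β, β') ∈ rdiag Ω from hmeet ⟨?_, ?_⟩)
  · exact hx.trans (hx.symm (subset_eqvClosure x hβ)) (subset_eqvClosure x hβ')
  · exact hy.trans (subset_eqvClosure y hγ) (hy.symm (subset_eqvClosure y hγ'))

end Relations

namespace CohCfg

variable {Ω : Type*} (X : CohCfg Ω)

lemma nonempty_of_mem {s : Set (Ω × Ω)} (hs : s ∈ X.S) : s.Nonempty :=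
  Set.nonempty_iff_ne_empty.2 fun h => X.empty_not_mem (h ▸ hs)

lemma ncard_row_eq_of_mem_diag {r t : Set (Ω × Ω)} (hr : r ∈ X.S) (ht : t ∈ X.S) {α α' : Ω}
    (hα : (α, α) ∈ t) (hα' : (α', α') ∈ t) : (row r α).ncard = (row r α').ncard := by
  have hrow : ∀ a, {γ | (a, γ) ∈ r ∧ (γ, a) ∈ rconv r} = row r a :=
    fun a => Set.ext fun _ => and_self_iff
  have h := X.inter_const r hr (rconv r) (X.conv_mem r hr) t ht (α, α) hα (α', α') hα'
  rwa [hrow, hrow] at h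

lemma exists_diag_mem_of_mem {s : Set (Ω × Ω)} (hs : s ∈ X.S) {α β α' β' : Ω}
    (h : (α, β) ∈ s) (h' : (α', β') ∈ s) : ∃ t ∈ X.S, (α, α) ∈ t ∧ (α', α') ∈ t := by
  obtain ⟨t, ht, hαt⟩ := X.cover (α, α)
  refine ⟨t, ht, hαt, ?_⟩
  by_contra hα't
  have htd : t ⊆ rdiag Ω := X.diag_union t ht ⟨_, hαt, rfl⟩
  have hone : {γ | (α, γ) ∈ t ∧ (γ, β) ∈ s} = {α} :=
    Set.ext fun γ => ⟨fun hγ => (htd hγ.1).symm, by rintro rfl; exact ⟨hαt, h⟩⟩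
  have hzero : {γ | (α', γ) ∈ t ∧ (γ, β') ∈ s} = ∅ :=
    Set.eq_empty_of_forall_notMem fun γ ⟨hγ, _⟩ => by
      obtain rfl : α' = γ := htd hγ
      exact hα't hγ
  -- the intersection number of `t, s` at a pair of `s` counts `1` or `0` according as its
  -- source lies in the fibre of `t` or not
  have hc := X.inter_const t ht s hs s hs (α, β) h (α', β') h'
  rw [hone, hzero] at hc
  simp at hc

lemma ncard_row_eq_of_mem {r s : Set (Ω × Ω)} (hr : r ∈ X.S) (hs : s ∈ X.S) {α β α' β' : Ω}
    (h : (α, β) ∈ s) (h' : (α', β') ∈ s) : (row r α).ncard = (row r α').ncard := by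
  obtain ⟨t, ht, hαt, hα't⟩ := X.exists_diag_mem_of_mem hs h h'
  exact X.ncard_row_eq_of_mem_diag hr ht hαt hα't

lemma valency_eq_ncard_row {s : Set (Ω × Ω)} (hs : s ∈ X.S) {α β : Ω} (h : (α, β) ∈ s) :
    valency s = (row s α).ncard := by
  have himg : (fun α' => (row s α').ncard) '' {α' | ∃ β', (α', β') ∈ s} = {(row s α).ncard} :=
    Set.eq_singleton_iff_unique_mem.2 ⟨⟨α, ⟨β, h⟩, rfl⟩,
      fun _ ⟨_, ⟨_, h'⟩, hn⟩ => hn ▸ X.ncard_row_eq_of_mem hs hs h' h⟩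
  exact (congrArg sSup himg).trans (csSup_singleton _)

lemma valency_rcomp [Finite Ω] {x y : Set (Ω × Ω)} (hx : x ∈ X.S) (hy : y ∈ X.S)
    (hxy : rcomp x y ∈ X.S) (hmeet : eqvClosure x ∩ eqvClosure y ⊆ rdiag Ω) :
    valency (rcomp x y) = valency x * valency y := by
  obtain ⟨⟨α, δ⟩, β₀, hαβ₀, hβ₀δ⟩ := X.nonempty_of_mem hxy
  have hrow_y : ∀ β ∈ row x α, (row y β).ncard = valency y := fun β hβ =>
    (X.ncard_row_eq_of_mem hy (X.conv_mem x hx) (show (β, α) ∈ rconv x from hβ) hαβ₀).trans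
      (X.valency_eq_ncard_row hy hβ₀δ).symm
  rw [X.valency_eq_ncard_row hxy ⟨β₀, hαβ₀, hβ₀δ⟩, X.valency_eq_ncard_row hx hαβ₀, row_rcomp]
  exact ncard_biUnion_of_ncard_eq (pairwiseDisjoint_row_of_inter_subset_rdiag hmeet α) hrow_y

end CohCfg

theorem stmt14_general {Ω : Type*} [Fintype Ω] (X : CohCfg Ω) (s x y : Set (Ω × Ω))
    (hs : s ∈ X.S) (hx : x ∈ X.S) (hy : y ∈ X.S)
    (hcomp : s = rcomp x y)
    (hmeet : eqvClosure x ∩ eqvClosure y = rdiag Ω) :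
    valency s * valency (rconv s)
      = (valency x * valency (rconv x)) * (valency y * valency (rconv y)) := by
  subst hcomp
  have hmeet' : eqvClosure (rconv y) ∩ eqvClosure (rconv x) ⊆ rdiag Ω := by
    rw [eqvClosure_rconv, eqvClosure_rconv, Set.inter_comm, hmeet]
  have hconv := X.conv_mem _ hs
  rw [rconv_rcomp] at hconv ⊢
  rw [X.valency_rcomp hx hy hs hmeet.subset,
    X.valency_rcomp (X.conv_mem y hy) (X.conv_mem x hx) hconv hmeet']
  ring

/-- under the hypotheses of Statement 13, `d(s) = d(x)·d(y)`,
where `d(r) = n_r · n_{r*}`. -/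
theorem stmt14 {Ω : Type*} [Fintype Ω] (X : CohCfg Ω) (s x y : Set (Ω × Ω))
    (hs : s ∈ X.S) (hx : x ∈ X.S) (hy : y ∈ X.S)
    (hxi : Disjoint x (rdiag Ω)) (hyi : Disjoint y (rdiag Ω))
    (hcomp : s = rcomp x y)
    (hmeet : eqvClosure x ∩ eqvClosure y = rdiag Ω) :
    valency s * valency (rconv s)
      = (valency x * valency (rconv x)) * (valency y * valency (rconv y)) :=
  stmt14_general X s x y hs hx hy hcomp hmeet
end
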